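/- Let λ < 1, g ≥ 0, ε ∈ [0,1], n ≥ 2, and consider the Markov chain Q on ℤ_+^n for the Po2-(g,ε) scheme (arrivals at rate nλ, uniform pair sampling, join probability p(Q_i,Q_j) = 1{Q_j−Q_i ≥ g+1} + (1−ε)1{0<Q_j−Q_i≤g} + ε1{0<Q_i−Q_j≤g} + 1{Q_i=Q_j, i<j}, unit service rates). Then the drift of V(Q) = Σ_i Q_i² satisfies D V(Q) ≤ 2(λ−1)Σ_i Q_i + 2nλg·1{ε>1/2} + nλ + B(Q), where B(Q) = Σ_i 1{Q_i > 0}. -/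

import Mathlib

/-!
For `i ≠ j` the join probabilities `p(Q_i, Q_j)` and `p(Q_j, Q_i)` sum to one, so pairing each ordered
pair with its swap turns the arrival part of the drift into a sum over pairs of convex combinations of
`2 Q_i + 1` and `2 Q_j + 1`. Such a combination exceeds the average `Q_i + Q_j + 1` only when the
scheme favours the longer queue, i.e. with weight `ε` inside the gap `g`, and then by at most
`(2ε - 1) g ≤ 2g · 1{ε > 1/2}`. Averaging over the `n - 1` partners of each server gives
`λ (2 Σ Q_i + n (2g · 1{ε > 1/2} + 1))`, and each busy server contributes `1 - 2 Q_i` on service.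
-/

open Finset

/-- Join probability under the Po2-(g,ε) scheme. -/
noncomputable def pGE (g : ℕ) (ε : ℝ) {n : ℕ} (qi qj : ℕ) (i j : Fin n) : ℝ :=
  (if (g : ℤ) + 1 ≤ (qj : ℤ) - (qi : ℤ) then 1 else 0)
  + (1 - ε) * (if 0 < (qj : ℤ) - (qi : ℤ) ∧ (qj : ℤ) - (qi : ℤ) ≤ (g : ℤ) then 1 else 0)
  + ε * (if 0 < (qi : ℤ) - (qj : ℤ) ∧ (qi : ℤ) - (qj : ℤ) ≤ (g : ℤ) then 1 else 0)
  + (if qi = qj ∧ i < j then 1 else 0)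

/-- Arrival rate to server i. -/
noncomputable def rPlusGE (lam : ℝ) (g : ℕ) (ε : ℝ) {n : ℕ} (Q : Fin n → ℕ) (i : Fin n) : ℝ :=
  (2 * lam / ((n : ℝ) - 1)) * ∑ j ∈ Finset.univ.erase i, pGE g ε (Q i) (Q j) i j

/-- Generator drift of the quadratic Lyapunov function `V(Q) = Σ_i Q_i²`. -/
noncomputable def driftQuadGE (lam : ℝ) (g : ℕ) (ε : ℝ) {n : ℕ} (Q : Fin n → ℕ) : ℝ :=
  ∑ i, (rPlusGE lam g ε Q i * (((Q i : ℝ) + 1)^2 - (Q i : ℝ)^2)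
    + (if 0 < Q i then (1 : ℝ) else 0) * (((Q i : ℝ) - 1)^2 - (Q i : ℝ)^2))

section OffDiagonal

variable {ι : Type*} [Fintype ι] [DecidableEq ι]

lemma sum_sum_erase_swap {M : Type*} [AddCommMonoid M] (f : ι → ι → M) :
    ∑ i, ∑ j ∈ univ.erase i, f j i = ∑ i, ∑ j ∈ univ.erase i, f i j :=
  sum_comm' fun i j => by simp only [mem_erase, mem_univ, and_true, true_and]; exact ne_comm

lemma sum_sum_erase_le_of_add_swap_le (f : ι → ι → ℝ) (u : ι → ℝ) (c : ℝ)
    (h : ∀ i j, i ≠ j → f i j + f j i ≤ u i + u j + c) :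
    ∑ i, ∑ j ∈ univ.erase i, f i j ≤ (Fintype.card ι - 1) * (∑ i, u i + Fintype.card ι * c / 2) := by
  have hconst (i : ι) :
      ∑ j ∈ univ.erase i, (2 * u i + c) = (Fintype.card ι - 1) * (2 * u i + c) := by
    rw [sum_erase_eq_sub (mem_univ i), sum_const, card_univ, nsmul_eq_mul]
    ring
  have hpairs : 2 * ∑ i, ∑ j ∈ univ.erase i, f i j ≤ ∑ i, ∑ j ∈ univ.erase i, (2 * u i + c) :=
    calc 2 * ∑ i, ∑ j ∈ univ.erase i, f i j = ∑ i, ∑ j ∈ univ.erase i, (f i j + f j i) := by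
          simp only [sum_add_distrib, sum_sum_erase_swap f]
          ring
      _ ≤ ∑ i, ∑ j ∈ univ.erase i, (u i + u j + c) :=
          sum_le_sum fun i _ => sum_le_sum fun j hj => h i j (ne_of_mem_erase hj).symm
      _ = ∑ i, ∑ j ∈ univ.erase i, (2 * u i + c) := by
          simp only [two_mul, sum_add_distrib, sum_sum_erase_swap (fun i _ => u i)]
  simp only [hconst, ← mul_sum, sum_add_distrib, sum_const, card_univ, nsmul_eq_mul] at hpairs
  linarith

end OffDiagonal

section JoinProbability

variable (g : ℕ) (ε : ℝ) {n : ℕ}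

lemma pGE_of_lt {a b : ℕ} (h : a < b) (i j : Fin n) :
    pGE g ε a b i j = if a + g < b then 1 else 1 - ε := by
  unfold pGE
  split_ifs <;> first | omega | ring

lemma pGE_of_gt {a b : ℕ} (h : b < a) (i j : Fin n) :
    pGE g ε a b i j = if b + g < a then 0 else ε := by
  unfold pGE
  split_ifs <;> first | omega | ring

lemma pGE_self (a : ℕ) (i j : Fin n) : pGE g ε a a i j = if i < j then 1 else 0 := by
  simp [pGE]

lemma pGE_add_pGE_swap (a b : ℕ) {i j : Fin n} (hij : i ≠ j) :
    pGE g ε a b i j + pGE g ε b a j i = 1 := by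
  rcases lt_trichotomy a b with h | rfl | h
  · rw [pGE_of_lt g ε h, pGE_of_gt g ε h]
    split_ifs <;> ring
  · rw [pGE_self, pGE_self]
    rcases hij.lt_or_gt with h | h <;> simp [h, h.not_gt]
  · rw [pGE_of_gt g ε h, pGE_of_lt g ε h]
    split_ifs <;> ring

variable {ε}

lemma pGE_swap_sub_mul_le (hε1 : ε ≤ 1) (a b : ℕ) (i j : Fin n) :
    (pGE g ε b a j i - pGE g ε a b i j) * ((b : ℝ) - a) ≤ 2 * g * (if ε > 1/2 then 1 else 0) := by
  wlog hab : a ≤ b generalizing a b i j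
  · linarith [this b a j i (by omega)]
  rcases hab.lt_or_eq with h | rfl
  · rw [pGE_of_lt g ε h, pGE_of_gt g ε h]
    have : (a : ℝ) < b := by exact_mod_cast h
    split_ifs with hg hε <;> rify at hg <;> nlinarith
  · rw [sub_self, mul_zero]
    positivity

lemma pGE_pair_bound (hε1 : ε ≤ 1) (a b : ℕ) {i j : Fin n} (hij : i ≠ j) :
    pGE g ε a b i j * (2 * a + 1) + pGE g ε b a j i * (2 * b + 1)
      ≤ a + b + (2 * g * (if ε > 1/2 then 1 else 0) + 1) := by
  have hsum := pGE_add_pGE_swap g ε a b hij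
  have hdiff := pGE_swap_sub_mul_le g hε1 a b i j
  linear_combination hdiff + (a + b + 1 : ℝ) * hsum

end JoinProbability

lemma driftQuadGE_eq (lam : ℝ) (g : ℕ) (ε : ℝ) {n : ℕ} (Q : Fin n → ℕ) :
    driftQuadGE lam g ε Q
      = 2 * lam / ((n : ℝ) - 1) * ∑ i, ∑ j ∈ univ.erase i, pGE g ε (Q i) (Q j) i j * (2 * Q i + 1)
        + (∑ i, (if 0 < Q i then (1 : ℝ) else 0) - 2 * ∑ i, (Q i : ℝ)) := by
  simp only [driftQuadGE, rPlusGE, sum_add_distrib, mul_sum, sum_mul, ← sum_sub_distrib]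
  congr 1
  · refine sum_congr rfl fun i _ => sum_congr rfl fun j _ => ?_
    ring
  · refine sum_congr rfl fun i _ => ?_
    split_ifs with h
    · ring
    · simp [Nat.eq_zero_of_not_pos h]

theorem po2ge_quadratic_drift_bound_general (lam : ℝ) (hlam0 : 0 ≤ lam)
    (g : ℕ) (ε : ℝ) (hε1 : ε ≤ 1)
    (n : ℕ) (hn : 2 ≤ n) (Q : Fin n → ℕ) :
    driftQuadGE lam g ε Q
      ≤ 2 * (lam - 1) * ∑ i, (Q i : ℝ)
        + 2 * (n : ℝ) * lam * (g : ℝ) * (if ε > 1/2 then 1 else 0)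
        + (n : ℝ) * lam + ∑ i, (if 0 < Q i then (1 : ℝ) else 0) := by
  set c : ℝ := 2 * g * (if ε > 1/2 then 1 else 0) + 1
  have hn1 : (0 : ℝ) < n - 1 := by
    have : (2 : ℝ) ≤ n := by exact_mod_cast hn
    linarith
  have harrivals := sum_sum_erase_le_of_add_swap_le
    (fun i j => pGE g ε (Q i) (Q j) i j * (2 * Q i + 1)) (fun i => (Q i : ℝ)) c
    fun i j hij => pGE_pair_bound g hε1 (Q i) (Q j) hij
  rw [Fintype.card_fin] at harrivals
  rw [driftQuadGE_eq]
  calc _ ≤ 2 * lam / ((n : ℝ) - 1) * (((n : ℝ) - 1) * (∑ i, (Q i : ℝ) + n * c / 2))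
          + (∑ i, (if 0 < Q i then (1 : ℝ) else 0) - 2 * ∑ i, (Q i : ℝ)) := by
        gcongr
    _ = _ := by
        rw [← mul_assoc, div_mul_cancel₀ _ hn1.ne']
        ring

theorem po2ge_quadratic_drift_bound (lam : ℝ) (hlam0 : 0 ≤ lam) (hlam1 : lam < 1)
    (g : ℕ) (ε : ℝ) (hε0 : 0 ≤ ε) (hε1 : ε ≤ 1)
    (n : ℕ) (hn : 2 ≤ n) (Q : Fin n → ℕ) :
    driftQuadGE lam g ε Q
      ≤ 2 * (lam - 1) * ∑ i, (Q i : ℝ)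
        + 2 * (n : ℝ) * lam * (g : ℝ) * (if ε > 1/2 then 1 else 0)
        + (n : ℝ) * lam + ∑ i, (if 0 < Q i then (1 : ℝ) else 0) :=
  po2ge_quadratic_drift_bound_general lam hlam0 g ε hε1 n hn Q
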